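/- Let m>n. If φ∈N̂ₙ, then there are φ₁,…,φ_k∈N̂ₘ such that XP⁻⊢φ≡⋁_{1≤i≤k}φᵢ. If α∈P̂ₙ, then there are α₁,…,α_k∈P̂ₘ such that XP⁻⊢α≡⋃_{1≤i≤k}αᵢ. -/

import Mathlib

attribute [local instance] Classical.propDecidable

mutual
/-- Path expressions of `XPath↓⁻` (no inequality tests in the language). -/
inductive PathExpr (A : Type) : Type
  | eps : PathExpr A
  | down : PathExpr A
  | test : NodeExpr A → PathExpr A
  | comp : PathExpr A → PathExpr A → PathExpr A
  | union : PathExpr A → PathExpr A → PathExpr A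

/-- Node expressions of `XPath↓⁻` (no inequality tests in the language). -/
inductive NodeExpr (A : Type) : Type
  | lab : A → NodeExpr A
  | neg : NodeExpr A → NodeExpr A
  | conj : NodeExpr A → NodeExpr A → NodeExpr A
  | diam : PathExpr A → NodeExpr A
  | eqTest : PathExpr A → PathExpr A → NodeExpr A
end

namespace XPathMinus

variable {A : Type}

/-- Defined disjunction `φ ∨ ψ := ¬(¬φ ∧ ¬ψ)`. -/
def nOr (φ ψ : NodeExpr A) : NodeExpr A := .neg (.conj (.neg φ) (.neg ψ))

/-- `⊤ := ⟨ε⟩`. -/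
def topN : NodeExpr A := .diam .eps

/-- `⊥ := ¬⊤`. -/
def botN : NodeExpr A := .neg topN

/-- `⊥̄ := [¬⟨ε⟩]`. -/
def botP : PathExpr A := .test (.neg (.diam .eps))

def bigOr (l : List (NodeExpr A)) : NodeExpr A := l.foldr nOr botN

def bigUnion (l : List (PathExpr A)) : PathExpr A := l.foldr PathExpr.union botP

/-- A data tree: a tree (connected, acyclic, unique parents except the root)
whose nodes carry labels from `A`, together with a partition of the nodes
(presented as an equivalence relation `eqd`). -/
structure DataTree (A : Type) where
  X : Type
  child : X → X → Prop
  root : X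
  label : X → A
  eqd : X → X → Prop
  eqd_equiv : Equivalence eqd
  parent_unique : ∀ ⦃x y z : X⦄, child x z → child y z → x = y
  root_no_parent : ∀ x : X, ¬ child x root
  reach : ∀ x : X, Relation.ReflTransGen child root x
  acyclic : ∀ x : X, ¬ Relation.TransGen child x x

mutual
/-- Semantics of path expressions. -/
def psem (T : DataTree A) : PathExpr A → T.X → T.X → Prop
  | .eps, x, y => x = y
  | .down, x, y => T.child x y
  | .test φ, x, y => x = y ∧ nsem T φ x
  | .comp α β, x, z => ∃ y, psem T α x y ∧ psem T β y z
  | .union α β, x, y => psem T α x y ∨ psem T β x y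

/-- Semantics of node expressions. -/
def nsem (T : DataTree A) : NodeExpr A → T.X → Prop
  | .lab a, x => T.label x = a
  | .neg φ, x => ¬ nsem T φ x
  | .conj φ ψ, x => nsem T φ x ∧ nsem T ψ x
  | .diam α, x => ∃ y, psem T α x y
  | .eqTest α β, x => ∃ y z, psem T α x y ∧ psem T β x z ∧ T.eqd y z
end

/-- Semantic equivalence of node expressions: same denotation in every data tree. -/
def nodeValid (φ ψ : NodeExpr A) : Prop :=
  ∀ (T : DataTree A) (x : T.X), nsem T φ x ↔ nsem T ψ x

/-- Semantic equivalence of path expressions: same denotation in every data tree. -/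
def pathValid (α β : PathExpr A) : Prop :=
  ∀ (T : DataTree A) (x y : T.X), psem T α x y ↔ psem T β x y

mutual
/-- Derivability of node equivalences in the axiomatic system `XP⁻`. -/
inductive NDer {A : Type} [Fintype A] : NodeExpr A → NodeExpr A → Prop
  | refl (φ : NodeExpr A) : NDer φ φ
  | symm {φ ψ : NodeExpr A} : NDer φ ψ → NDer ψ φ
  | trans {φ ψ ρ : NodeExpr A} : NDer φ ψ → NDer ψ ρ → NDer φ ρ
  | congr_neg {φ ψ : NodeExpr A} : NDer φ ψ → NDer (.neg φ) (.neg ψ)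
  | congr_conj {φ φ' ψ ψ' : NodeExpr A} :
      NDer φ φ' → NDer ψ ψ' → NDer (.conj φ ψ) (.conj φ' ψ')
  | congr_diam {α β : PathExpr A} : PDer α β → NDer (.diam α) (.diam β)
  | congr_eqTest {α α' β β' : PathExpr A} :
      PDer α α' → PDer β β' → NDer (.eqTest α β) (.eqTest α' β')
  | lbAx1 : NDer topN (bigOr ((Finset.univ : Finset A).toList.map NodeExpr.lab))
  | lbAx2 {a b : A} : a ≠ b → NDer botN (.conj (.lab a) (.lab b))
  | ndAx1 (φ ψ : NodeExpr A) :
      NDer φ (nOr (.neg (nOr (.neg φ) ψ)) (.neg (nOr (.neg φ) (.neg ψ))))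
  | ndAx2 (φ : NodeExpr A) : NDer (.diam (.test φ)) φ
  | ndAx3 (α β : PathExpr A) : NDer (.diam (.union α β)) (nOr (.diam α) (.diam β))
  | ndAx4 (α β : PathExpr A) : NDer (.diam (.comp α β)) (.diam (.comp α (.test (.diam β))))
  | eqAx1 (α β : PathExpr A) : NDer (.eqTest α β) (.eqTest β α)
  | eqAx2 (α β γ : PathExpr A) :
      NDer (.eqTest (.union α β) γ) (nOr (.eqTest α γ) (.eqTest β γ))
  | eqAx3 (φ : NodeExpr A) (α β : PathExpr A) :
      NDer (.conj φ (.eqTest α β)) (.eqTest (.comp (.test φ) α) β)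
  | eqAx4 (α β : PathExpr A) : NDer (nOr (.eqTest α β) (.diam α)) (.diam α)
  | eqAx5 (γ α β : PathExpr A) :
      NDer (nOr (.diam (.comp γ (.test (.eqTest α β)))) (.eqTest (.comp γ α) (.comp γ β)))
        (.eqTest (.comp γ α) (.comp γ β))
  | eqAx6 (α : PathExpr A) : NDer (.eqTest α α) (.diam α)
  | eqAx7 (α β : PathExpr A) :
      NDer (nOr (.conj (.eqTest α .eps) (.eqTest β .eps)) (.eqTest α β)) (.eqTest α β)
  | eqAx8 (α β γ : PathExpr A) :
      NDer (nOr (.eqTest α (.comp β (.test (.eqTest .eps γ)))) (.eqTest α (.comp β γ)))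
        (.eqTest α (.comp β γ))

/-- Derivability of path equivalences in the axiomatic system `XP⁻`. -/
inductive PDer {A : Type} [Fintype A] : PathExpr A → PathExpr A → Prop
  | refl (α : PathExpr A) : PDer α α
  | symm {α β : PathExpr A} : PDer α β → PDer β α
  | trans {α β γ : PathExpr A} : PDer α β → PDer β γ → PDer α γ
  | congr_test {φ ψ : NodeExpr A} : NDer φ ψ → PDer (.test φ) (.test ψ)
  | congr_comp {α α' β β' : PathExpr A} :
      PDer α α' → PDer β β' → PDer (.comp α β) (.comp α' β')
  | congr_union {α α' β β' : PathExpr A} :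
      PDer α α' → PDer β β' → PDer (.union α β) (.union α' β')
  | prAx1 (α β : PathExpr A) : PDer (.comp (.comp α (.test (.neg (.diam β)))) β) botP
  | prAx2 : PDer (.test topN) (.eps : PathExpr A)
  | prAx3 (φ ψ : NodeExpr A) : PDer (.test (nOr φ ψ)) (.union (.test φ) (.test ψ))
  | isAx1 (α β γ : PathExpr A) : PDer (.union (.union α β) γ) (.union α (.union β γ))
  | isAx2 (α β : PathExpr A) : PDer (.union α β) (.union β α)
  | isAx3 (α : PathExpr A) : PDer (.union α α) α
  | isAx4 (α β γ : PathExpr A) : PDer (.comp α (.comp β γ)) (.comp (.comp α β) γ)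
  | isAx5l (α : PathExpr A) : PDer (.comp .eps α) α
  | isAx5r (α : PathExpr A) : PDer (.comp α .eps) α
  | isAx6l (α β γ : PathExpr A) :
      PDer (.comp α (.union β γ)) (.union (.comp α β) (.comp α γ))
  | isAx6r (α β γ : PathExpr A) :
      PDer (.comp (.union α β) γ) (.union (.comp α γ) (.comp β γ))
  | isAx7 (α : PathExpr A) : PDer (.union botP α) α
end

/-- A node expression is `XP⁻`-consistent if it is not provably equivalent to `⊥`. -/
def NConsistent [Fintype A] (φ : NodeExpr A) : Prop := ¬ NDer φ botN

/-- A path expression is `XP⁻`-consistent if it is not provably equivalent to `⊥̄`. -/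
def PConsistent [Fintype A] (α : PathExpr A) : Prop := ¬ PDer α botP

/-- The normal form `a ∧ ⋀_{d ∈ C} d ∧ ⋀_{d ∈ D∖C} ¬d`, built along the canonical listing `D`. -/
noncomputable def mkNF (a : A) (C D : List (NodeExpr A)) : NodeExpr A :=
  D.foldl (fun acc d => .conj acc (if d ∈ C then d else .neg d)) (.lab a)

/-- The canonical lists of normal-form path expressions (first component)
and normal-form node expressions (second component) at each level. -/
noncomputable def NF (A : Type) [Fintype A] : ℕ → List (PathExpr A) × List (NodeExpr A)
  | 0 =>
    ([.eps],
      (Finset.univ : Finset A).toList.map fun a =>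
        NodeExpr.conj (.lab a) (.eqTest .eps .eps))
  | n+1 =>
    let P := (NF A n).1
    let N := (NF A n).2
    let P' : List (PathExpr A) :=
      .eps :: N.flatMap fun ψ => P.map fun β => PathExpr.comp .down (.comp (.test ψ) β)
    let D : List (NodeExpr A) :=
      P'.flatMap fun α => P'.map fun β => NodeExpr.eqTest α β
    let cands : List (NodeExpr A) :=
      D.sublists.flatMap fun C => (Finset.univ : Finset A).toList.map fun a => mkNF a C D
    (P', cands.filter fun φ => decide (NConsistent φ))

/-- `P̂ₙ`: normal-form path expressions of level `n`. -/
noncomputable def Pnf (A : Type) [Fintype A] (n : ℕ) : Set (PathExpr A) :=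
  {α | α ∈ (NF A n).1}

/-- `N̂ₙ`: normal-form node expressions of level `n`. -/
noncomputable def Nnf (A : Type) [Fintype A] (n : ℕ) : Set (NodeExpr A) :=
  {φ | φ ∈ (NF A n).2}

/-- `D̂ₙ`: data-aware diamonds between normal-form paths of level `n`. -/
noncomputable def Dnf (A : Type) [Fintype A] (n : ℕ) : Set (NodeExpr A) :=
  {φ | ∃ α ∈ Pnf A n, ∃ β ∈ Pnf A n, φ = NodeExpr.eqTest α β}

/-- The conjuncts of a node expression (flattening `∧`). -/
def conjuncts : NodeExpr A → List (NodeExpr A)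
  | .conj φ ψ => conjuncts φ ++ conjuncts ψ
  | φ => [φ]

/-- `δ` is a conjunct of `ψ`. -/
def IsConjunct (δ ψ : NodeExpr A) : Prop := δ ∈ conjuncts ψ

/-- Length of a path expression. -/
def plen : PathExpr A → ℕ
  | .eps => 0
  | .down => 1
  | .test _ => 0
  | .comp α β => plen α + plen β
  | .union α β => max (plen α) (plen β)

mutual
/-- Downward depth of a node expression. -/
def ndd : NodeExpr A → ℕ
  | .lab _ => 0
  | .neg φ => ndd φ
  | .conj φ ψ => max (ndd φ) (ndd ψ)
  | .diam α => pdd α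
  | .eqTest α β => max (pdd α) (pdd β)

/-- Downward depth of a path expression. -/
def pdd : PathExpr A → ℕ
  | .eps => 0
  | .down => 1
  | .test φ => ndd φ
  | .comp α β => max (max (pdd α) (pdd β)) (plen α + pdd β)
  | .union α β => max (pdd α) (pdd β)
end

/-- The path `↓[ψ]α`. -/
def dPath (ψ : NodeExpr A) (α : PathExpr A) : PathExpr A :=
  .comp .down (.comp (.test ψ) α)

/-- A path expression whose leftmost symbol is `↓`. -/
def startsWithDown : PathExpr A → Prop
  | .down => True
  | .comp α _ => startsWithDown α
  | _ => False

end XPathMinus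

/-!
A normal form `φ ∈ N̂ₙ` is a label together with a sign for every test of `D̂ₙ`. Splitting `⊤`
along the labels and the tests of `D̂ₙ₊₁` writes it as a disjunction of candidates `θ` of level
`n + 1`. Every path of `P̂ₙ` is provably a union of paths of `P̂ₙ₊₁`, so every test of `D̂ₙ` is a
disjunction of tests of `D̂ₙ₊₁`, and therefore each `θ` decides `φ`: `θ ∧ φ` is provably `θ` or
`⊥`. Hence `φ ≡ φ ∧ ⊤` is the disjunction of the consistent candidates that entail it, a
nonempty one because `φ` is consistent. Paths lift by distributing `↓[ψ]β` over the lifts of `ψ`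
and `β`, so the two lifts are proved together by induction on the level, then iterated. The only
semantic input is the consistency of the level-`0` forms `a ∧ ⟨ε = ε⟩`, read off a one-node tree.
-/

namespace XPathMinus

variable {A : Type}

section Semantics

theorem nsem_nOr (T : DataTree A) (φ ψ : NodeExpr A) (x : T.X) :
    nsem T (nOr φ ψ) x ↔ nsem T φ x ∨ nsem T ψ x := by
  simp only [nOr, nsem]; tauto

theorem nsem_bigOr (T : DataTree A) (l : List (NodeExpr A)) (x : T.X) :
    nsem T (bigOr l) x ↔ ∃ φ ∈ l, nsem T φ x := by
  induction l with
  | nil => simp [bigOr, botN, topN, nsem, psem]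
  | cons φ l ih => simp [bigOr, nsem_nOr, ← ih]

theorem NDer.sound [Fintype A] {φ ψ : NodeExpr A} (h : NDer φ ψ) : nodeValid φ ψ := by
  induction h using NDer.rec (motive_2 := fun α β _ => pathValid α β) <;> intro T <;>
    obtain ⟨hrefl, hsymm, htrans⟩ := T.eqd_equiv <;>
    simp only [nodeValid, pathValid, nsem_nOr, nsem_bigOr, nsem, psem, topN, botN, botP,
      List.mem_map, Finset.mem_toList, Finset.mem_univ, true_and, exists_exists_eq_and] at * <;>
    grind

def singletonTree (a : A) : DataTree A where
  X := PUnit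
  child _ _ := False
  root := PUnit.unit
  label _ := a
  eqd _ _ := True
  eqd_equiv := ⟨fun _ => trivial, fun _ => trivial, fun _ _ => trivial⟩
  parent_unique _ _ _ h := h.elim
  root_no_parent _ h := h
  reach _ := .refl
  acyclic _ h := by induction h <;> assumption

theorem nConsistent_lab_conj_eqTest_eps [Fintype A] (a : A) :
    NConsistent (.conj (.lab a) (.eqTest .eps .eps)) := fun h =>
  (h.sound (singletonTree a) PUnit.unit).mp ⟨rfl, _, _, rfl, rfl, trivial⟩ ⟨_, rfl⟩

end Semantics

section Boolean

variable [Fintype A]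

namespace NDer

theorem or_congr {φ φ' ψ ψ' : NodeExpr A} (h₁ : NDer φ φ') (h₂ : NDer ψ ψ') :
    NDer (nOr φ ψ) (nOr φ' ψ') :=
  .congr_neg (.congr_conj (.congr_neg h₁) (.congr_neg h₂))

/-- The semiring laws of `∪` transfer to `∨` through this equivalence. -/
theorem or_eq_diam_union (φ ψ : NodeExpr A) :
    NDer (nOr φ ψ) (.diam (.union (.test φ) (.test ψ))) :=
  .trans (.or_congr (.symm (.ndAx2 φ)) (.symm (.ndAx2 ψ))) (.symm (.ndAx3 _ _))

theorem or_comm (φ ψ : NodeExpr A) : NDer (nOr φ ψ) (nOr ψ φ) :=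
  .trans (.or_eq_diam_union φ ψ)
    (.trans (.congr_diam (.isAx2 _ _)) (.symm (.or_eq_diam_union ψ φ)))

theorem or_assoc (φ ψ χ : NodeExpr A) :
    NDer (nOr (nOr φ ψ) χ) (nOr φ (nOr ψ χ)) := by
  have h₁ : NDer (nOr (nOr φ ψ) χ)
      (.diam (.union (.union (.test φ) (.test ψ)) (.test χ))) :=
    .trans (.or_eq_diam_union _ _) (.congr_diam (.congr_union (.prAx3 φ ψ) (.refl _)))
  have h₂ : NDer (nOr φ (nOr ψ χ))
      (.diam (.union (.test φ) (.union (.test ψ) (.test χ)))) :=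
    .trans (.or_eq_diam_union _ _) (.congr_diam (.congr_union (.refl _) (.prAx3 ψ χ)))
  exact .trans h₁ (.trans (.congr_diam (.isAx1 _ _ _)) (.symm h₂))

theorem or_idem (φ : NodeExpr A) : NDer (nOr φ φ) φ :=
  .trans (.or_eq_diam_union φ φ) (.trans (.congr_diam (.isAx3 _)) (.ndAx2 φ))

theorem bot_or (φ : NodeExpr A) : NDer (nOr botN φ) φ :=
  .trans (.or_eq_diam_union botN φ) (.trans (.congr_diam (.isAx7 _)) (.ndAx2 φ))

theorem or_bot (φ : NodeExpr A) : NDer (nOr φ botN) φ :=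
  .trans (.or_comm _ _) (.bot_or φ)

theorem of_neg {φ ψ : NodeExpr A} (h : NDer (.neg φ) (.neg ψ)) : NDer φ ψ :=
  .trans (.ndAx1 φ ψ) (.trans
    (.or_congr (.congr_neg (.or_congr h (.refl _))) (.congr_neg (.or_congr h (.refl _))))
    (.symm (.ndAx1 ψ ψ)))

theorem not_not_bot : NDer (.neg (.neg (botN : NodeExpr A))) botN := by
  have h : NDer (botN : NodeExpr A) (nOr (.neg (.neg botN)) (.neg (.neg botN))) :=
    .trans (.ndAx1 botN botN)
      (.or_congr (.congr_neg (.trans (.or_comm _ _) (.bot_or _))) (.congr_neg (.or_idem _)))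
  exact .symm (.trans h (.or_idem _))

theorem not_not_top : NDer (.neg (.neg (topN : NodeExpr A))) topN :=
  .of_neg (not_not_bot : NDer (.neg (.neg (.neg (topN : NodeExpr A)))) (.neg topN))

theorem top_eq_not_or_not_not (φ : NodeExpr A) :
    NDer (topN : NodeExpr A) (nOr (.neg φ) (.neg (.neg φ))) :=
  .trans (.ndAx1 topN φ) (.or_congr (.congr_neg (.bot_or φ)) (.congr_neg (.bot_or (.neg φ))))

theorem not_or_top (φ : NodeExpr A) : NDer (nOr (.neg φ) topN) topN :=
  .trans (.or_congr (.refl _) (.top_eq_not_or_not_not φ)) (.trans (.symm (.or_assoc _ _ _))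
    (.trans (.or_congr (.or_idem _) (.refl _)) (.symm (.top_eq_not_or_not_not φ))))

theorem not_not (φ : NodeExpr A) : NDer (.neg (.neg φ)) φ := by
  have h : NDer (.neg (nOr (.neg φ) (.neg botN))) botN :=
    .congr_neg (.trans (.or_congr (.refl _) not_not_top) (.not_or_top φ))
  exact .symm (.trans (.ndAx1 φ botN)
    (.trans (.or_congr (.congr_neg (.or_bot _)) h) (.or_bot _)))

theorem not_and (φ ψ : NodeExpr A) :
    NDer (.neg (.conj φ ψ)) (nOr (.neg φ) (.neg ψ)) :=
  .symm (.congr_neg (.congr_conj (.not_not φ) (.not_not ψ)))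

theorem and_comm (φ ψ : NodeExpr A) : NDer (.conj φ ψ) (.conj ψ φ) :=
  .of_neg (.trans (.not_and φ ψ) (.trans (.or_comm _ _) (.symm (.not_and ψ φ))))

theorem and_assoc (φ ψ χ : NodeExpr A) :
    NDer (.conj (.conj φ ψ) χ) (.conj φ (.conj ψ χ)) :=
  .of_neg (.trans (.not_and _ _) (.trans (.or_congr (.not_and φ ψ) (.refl _))
    (.trans (.or_assoc _ _ _)
      (.trans (.or_congr (.refl _) (.symm (.not_and ψ χ))) (.symm (.not_and _ _))))))

theorem and_idem (φ : NodeExpr A) : NDer (.conj φ φ) φ :=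
  .of_neg (.trans (.not_and φ φ) (.or_idem _))

theorem or_not (φ : NodeExpr A) : NDer (nOr φ (.neg φ)) topN :=
  .trans (.or_congr (.symm (.not_not φ)) (.refl _))
    (.trans (.or_comm _ _) (.symm (.top_eq_not_or_not_not φ)))

theorem and_not (φ : NodeExpr A) : NDer (.conj φ (.neg φ)) botN :=
  .of_neg (.trans (.not_and _ _) (.trans (.symm (.top_eq_not_or_not_not φ)) (.symm not_not_top)))

/-- Derived from the equality axioms `⟨α = α⟩ ≡ ⟨α⟩` and `φ ∧ ⟨α = β⟩ ≡ ⟨[φ]α = β⟩`. -/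
theorem diam_test_comp (φ : NodeExpr A) (α : PathExpr A) :
    NDer (.diam (.comp (.test φ) α)) (.conj φ (.diam α)) := by
  have h : NDer (.diam (.comp (.test φ) α)) (.conj φ (.conj φ (.diam α))) :=
    .trans (.symm (.eqAx6 _)) (.trans (.symm (.eqAx3 _ _ _)) (.congr_conj (.refl _)
      (.trans (.eqAx1 _ _) (.trans (.symm (.eqAx3 _ _ _)) (.congr_conj (.refl _) (.eqAx6 _))))))
  exact .trans h (.trans (.symm (.and_assoc _ _ _)) (.congr_conj (.and_idem φ) (.refl _)))

theorem and_top (φ : NodeExpr A) : NDer (.conj φ topN) φ :=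
  .trans (.symm (.diam_test_comp φ .eps)) (.trans (.congr_diam (.isAx5r _)) (.ndAx2 φ))

theorem top_and (φ : NodeExpr A) : NDer (.conj topN φ) φ :=
  .trans (.and_comm _ _) (.and_top φ)

theorem and_or (φ ψ χ : NodeExpr A) :
    NDer (.conj φ (nOr ψ χ)) (nOr (.conj φ ψ) (.conj φ χ)) :=
  .trans (.congr_conj (.refl _) (.or_eq_diam_union ψ χ)) (.trans (.symm (.diam_test_comp _ _))
    (.trans (.congr_diam (.isAx6l _ _ _)) (.trans (.ndAx3 _ _)
      (.or_congr (.trans (.diam_test_comp _ _) (.congr_conj (.refl _) (.ndAx2 ψ)))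
        (.trans (.diam_test_comp _ _) (.congr_conj (.refl _) (.ndAx2 χ)))))))

theorem or_and (φ ψ χ : NodeExpr A) :
    NDer (.conj (nOr φ ψ) χ) (nOr (.conj φ χ) (.conj ψ χ)) :=
  .trans (.and_comm _ _) (.trans (.and_or _ _ _) (.or_congr (.and_comm _ _) (.and_comm _ _)))

theorem and_bot (φ : NodeExpr A) : NDer (.conj φ botN) botN :=
  .trans (.congr_conj (.refl _) (.symm (.and_not φ))) (.trans (.symm (.and_assoc _ _ _))
    (.trans (.congr_conj (.and_idem φ) (.refl _)) (.and_not φ)))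

theorem bot_and (φ : NodeExpr A) : NDer (.conj botN φ) botN :=
  .trans (.and_comm _ _) (.and_bot φ)

theorem split (φ ψ : NodeExpr A) : NDer φ (nOr (.conj φ ψ) (.conj φ (.neg ψ))) :=
  .trans (.symm (.and_top φ)) (.trans (.congr_conj (.refl _) (.symm (.or_not ψ))) (.and_or _ _ _))

theorem and_not_of_and {θ φ : NodeExpr A} (h : NDer (.conj θ φ) θ) :
    NDer (.conj θ (.neg φ)) botN :=
  .trans (.congr_conj (.symm h) (.refl _))
    (.trans (.and_assoc _ _ _) (.trans (.congr_conj (.refl _) (.and_not φ)) (.and_bot θ)))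

theorem and_not_of_and_bot {θ φ : NodeExpr A} (h : NDer (.conj θ φ) botN) :
    NDer (.conj θ (.neg φ)) θ :=
  .symm (.trans (.split θ φ) (.trans (.or_congr h (.refl _)) (.bot_or _)))

theorem and_and_of_and {θ ℓ φ : NodeExpr A} (h : NDer (.conj θ φ) θ) :
    NDer (.conj (.conj θ ℓ) φ) (.conj θ ℓ) :=
  .trans (.and_assoc θ ℓ φ) (.trans (.congr_conj (.refl θ) (.and_comm ℓ φ))
    (.trans (.symm (.and_assoc θ φ ℓ)) (.congr_conj h (.refl ℓ))))

theorem eqTest_botP (γ : PathExpr A) : NDer (.eqTest botP γ) botN :=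
  .trans (.symm (.or_bot _)) (.trans (.or_congr (.refl _) (.symm (.ndAx2 botN)))
    (.trans (.eqAx4 _ _) (.ndAx2 botN)))

end NDer

end Boolean

section BigOps

variable [Fintype A]

theorem NDer.bigOr_append (l₁ l₂ : List (NodeExpr A)) :
    NDer (bigOr (l₁ ++ l₂)) (nOr (bigOr l₁) (bigOr l₂)) := by
  induction l₁ with
  | nil => exact .symm (.bot_or _)
  | cons φ l ih => exact .trans (.or_congr (.refl φ) ih) (.symm (.or_assoc _ _ _))

theorem NDer.bigOr_and (l : List (NodeExpr A)) (φ : NodeExpr A) :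
    NDer (.conj (bigOr l) φ) (bigOr (l.map (.conj · φ))) := by
  induction l with
  | nil => exact .bot_and φ
  | cons ψ l ih => exact .trans (.or_and _ _ _) (.or_congr (.refl _) ih)

theorem NDer.eqTest_bigUnion_left (l : List (PathExpr A)) (γ : PathExpr A) :
    NDer (.eqTest (bigUnion l) γ) (bigOr (l.map (.eqTest · γ))) := by
  induction l with
  | nil => exact .eqTest_botP γ
  | cons α l ih => exact .trans (.eqAx2 _ _ _) (.or_congr (.refl _) ih)

theorem PDer.union_bot (α : PathExpr A) : PDer (.union α botP) α :=
  .trans (.isAx2 _ _) (.isAx7 _)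

theorem PDer.bigUnion_append (l₁ l₂ : List (PathExpr A)) :
    PDer (bigUnion (l₁ ++ l₂)) (.union (bigUnion l₁) (bigUnion l₂)) := by
  induction l₁ with
  | nil => exact .symm (.isAx7 _)
  | cons α l ih => exact .trans (.congr_union (.refl α) ih) (.symm (.isAx1 _ _ _))

theorem PDer.bigUnion_map_flatMap {ι : Type*} {l : List ι} {f : ι → PathExpr A}
    {g : ι → List (PathExpr A)} (h : ∀ i ∈ l, PDer (f i) (bigUnion (g i))) :
    PDer (bigUnion (l.map f)) (bigUnion (l.flatMap g)) := by
  induction l with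
  | nil => exact .refl _
  | cons i l ih =>
    exact .trans (.congr_union (h i (by simp)) (ih fun j hj => h j (by simp [hj])))
      (.symm (.bigUnion_append _ _))

theorem PDer.test_bigOr (l : List (NodeExpr A)) :
    PDer (.test (bigOr l)) (bigUnion (l.map .test)) := by
  induction l with
  | nil => exact .refl _
  | cons φ l ih => exact .trans (.prAx3 φ (bigOr l)) (.congr_union (.refl _) ih)

theorem PDer.comp_bigUnion (γ : PathExpr A) {l : List (PathExpr A)} (hl : l ≠ []) :
    PDer (.comp γ (bigUnion l)) (bigUnion (l.map (.comp γ ·))) := by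
  induction l with
  | nil => exact absurd rfl hl
  | cons α l ih =>
    obtain rfl | hl' := eq_or_ne l []
    · exact .trans (.congr_comp (.refl γ) (.union_bot α)) (.symm (.union_bot _))
    · exact .trans (.isAx6l _ _ _) (.congr_union (.refl _) (ih hl'))

theorem PDer.bigUnion_comp {l : List (PathExpr A)} (hl : l ≠ []) (γ : PathExpr A) :
    PDer (.comp (bigUnion l) γ) (bigUnion (l.map (.comp · γ))) := by
  induction l with
  | nil => exact absurd rfl hl
  | cons α l ih =>
    obtain rfl | hl' := eq_or_ne l []
    · exact .trans (.congr_comp (.union_bot α) (.refl γ)) (.symm (.union_bot _))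
    · exact .trans (.isAx6r _ _ _) (.congr_union (.refl _) (ih hl'))

theorem PDer.bigUnion_comp_bigUnion {l m : List (PathExpr A)} (hl : l ≠ []) (hm : m ≠ []) :
    PDer (.comp (bigUnion l) (bigUnion m)) (bigUnion (l.flatMap fun α => m.map (.comp α ·))) :=
  .trans (.bigUnion_comp hl _) (.bigUnion_map_flatMap fun α _ => .comp_bigUnion α hm)

theorem PDer.dPath_bigOr_bigUnion {l : List (NodeExpr A)} {m : List (PathExpr A)}
    (hl : l ≠ []) (hm : m ≠ []) :
    PDer (dPath (bigOr l) (bigUnion m)) (bigUnion (l.flatMap fun ψ => m.map (dPath ψ))) := by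
  have hl' : l.map PathExpr.test ≠ [] := by simpa using hl
  have hne : (l.map PathExpr.test).flatMap (fun t => m.map (PathExpr.comp t)) ≠ [] := by
    simpa [List.flatMap_eq_nil_iff, hm] using l.exists_mem_of_ne_nil hl
  have hlist : ((l.map PathExpr.test).flatMap fun t => m.map (PathExpr.comp t)).map
      (PathExpr.comp .down) = l.flatMap fun ψ => m.map (dPath ψ) := by
    simp only [List.map_flatMap, List.flatMap_map, List.map_map, Function.comp_def]
    rfl
  exact .trans (.congr_comp (.refl _) (.trans (.congr_comp (.test_bigOr l) (.refl _))
    (.bigUnion_comp_bigUnion hl' hm))) (hlist ▸ .comp_bigUnion .down hne)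

end BigOps

section Disjunctions

variable [Fintype A]

def IsBigOrOf (S : Set (NodeExpr A)) (φ : NodeExpr A) : Prop :=
  ∃ l : List (NodeExpr A), (∀ ψ ∈ l, ψ ∈ S) ∧ NDer φ (bigOr l)

/-- The list is required to be nonempty because composition is only known to distribute over
nonempty unions: the axioms do not give `α⊥̄ ≡ ⊥̄`. -/
def IsBigUnionOf (S : Set (PathExpr A)) (α : PathExpr A) : Prop :=
  ∃ l : List (PathExpr A), l ≠ [] ∧ (∀ β ∈ l, β ∈ S) ∧ PDer α (bigUnion l)

variable {S S' : Set (NodeExpr A)} {φ ψ : NodeExpr A}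

theorem IsBigOrOf.of_nder (h : NDer φ ψ) (hψ : IsBigOrOf S ψ) : IsBigOrOf S φ :=
  let ⟨_, hl, hψl⟩ := hψ
  ⟨_, hl, h.trans hψl⟩

theorem IsBigOrOf.mono (hS : S ⊆ S') (hφ : IsBigOrOf S φ) : IsBigOrOf S' φ :=
  let ⟨l, hl, hφl⟩ := hφ
  ⟨l, fun ψ hψ => hS (hl ψ hψ), hφl⟩

theorem isBigOrOf_of_mem (h : φ ∈ S) : IsBigOrOf S φ :=
  ⟨[φ], by simpa using h, .symm (.or_bot φ)⟩

theorem isBigOrOf_botN : IsBigOrOf S botN :=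
  ⟨[], by simp, .refl _⟩

theorem IsBigOrOf.nOr (hφ : IsBigOrOf S φ) (hψ : IsBigOrOf S ψ) : IsBigOrOf S (nOr φ ψ) :=
  let ⟨l₁, hl₁, hφl₁⟩ := hφ
  let ⟨l₂, hl₂, hψl₂⟩ := hψ
  ⟨l₁ ++ l₂, by simpa [or_imp, forall_and] using ⟨hl₁, hl₂⟩,
    .trans (.or_congr hφl₁ hψl₂) (.symm (.bigOr_append l₁ l₂))⟩

theorem isBigOrOf_bigOr {l : List (NodeExpr A)} (h : ∀ φ ∈ l, IsBigOrOf S φ) :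
    IsBigOrOf S (bigOr l) := by
  induction l with
  | nil => exact isBigOrOf_botN
  | cons φ l ih => exact (h φ (by simp)).nOr (ih fun ψ hψ => h ψ (by simp [hψ]))

theorem IsBigOrOf.trans (hφ : IsBigOrOf S φ) (hS : ∀ ψ ∈ S, IsBigOrOf S' ψ) :
    IsBigOrOf S' φ :=
  let ⟨_, hl, hφl⟩ := hφ
  (isBigOrOf_bigOr fun ψ hψ => hS ψ (hl ψ hψ)).of_nder hφl

variable {P P' : Set (PathExpr A)} {α β : PathExpr A}

theorem IsBigUnionOf.of_pder (h : PDer α β) (hβ : IsBigUnionOf P β) : IsBigUnionOf P α :=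
  let ⟨_, hne, hl, hβl⟩ := hβ
  ⟨_, hne, hl, h.trans hβl⟩

theorem IsBigUnionOf.mono (hP : P ⊆ P') (hα : IsBigUnionOf P α) : IsBigUnionOf P' α :=
  let ⟨l, hne, hl, hαl⟩ := hα
  ⟨l, hne, fun β hβ => hP (hl β hβ), hαl⟩

theorem isBigUnionOf_of_mem (h : α ∈ P) : IsBigUnionOf P α :=
  ⟨[α], by simp, by simpa using h, .symm (.union_bot α)⟩

theorem IsBigUnionOf.union (hα : IsBigUnionOf P α) (hβ : IsBigUnionOf P β) :
    IsBigUnionOf P (.union α β) :=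
  let ⟨l₁, hne₁, hl₁, hαl₁⟩ := hα
  let ⟨l₂, _, hl₂, hβl₂⟩ := hβ
  ⟨l₁ ++ l₂, by simp [hne₁], by simpa [or_imp, forall_and] using ⟨hl₁, hl₂⟩,
    .trans (.congr_union hαl₁ hβl₂) (.symm (.bigUnion_append l₁ l₂))⟩

theorem isBigUnionOf_bigUnion {l : List (PathExpr A)} (hne : l ≠ [])
    (h : ∀ α ∈ l, IsBigUnionOf P α) : IsBigUnionOf P (bigUnion l) := by
  induction l with
  | nil => exact absurd rfl hne
  | cons α l ih =>
    obtain rfl | hl := eq_or_ne l []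
    · exact (h α (by simp)).of_pder (.union_bot α)
    · exact (h α (by simp)).union (ih hl fun β hβ => h β (by simp [hβ]))

theorem IsBigUnionOf.trans (hα : IsBigUnionOf P α) (hP : ∀ β ∈ P, IsBigUnionOf P' β) :
    IsBigUnionOf P' α :=
  let ⟨_, hne, hl, hαl⟩ := hα
  (isBigUnionOf_bigUnion hne fun β hβ => hP β (hl β hβ)).of_pder hαl

theorem isBigOrOf_eqTest (hα : IsBigUnionOf P α) (hβ : IsBigUnionOf P β) :
    IsBigOrOf {φ | ∃ α' ∈ P, ∃ β' ∈ P, φ = .eqTest α' β'} (.eqTest α β) := by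
  obtain ⟨L, -, hL, hαL⟩ := hα
  obtain ⟨M, -, hM, hβM⟩ := hβ
  refine .of_nder (.trans (.congr_eqTest hαL hβM) (.eqTest_bigUnion_left L _)) ?_
  refine isBigOrOf_bigOr ?_
  simp only [List.mem_map]
  rintro _ ⟨α', hα', rfl⟩
  refine .of_nder (.trans (.eqAx1 _ _) (.eqTest_bigUnion_left M _)) (isBigOrOf_bigOr ?_)
  simp only [List.mem_map]
  rintro _ ⟨β', hβ', rfl⟩
  exact .of_nder (.eqAx1 _ _) (isBigOrOf_of_mem ⟨α', hL α' hα', β', hM β' hβ', rfl⟩)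

theorem isBigUnionOf_dPath (hψ : NConsistent ψ) (hψS : IsBigOrOf S ψ)
    (hβ : IsBigUnionOf P β) :
    IsBigUnionOf {γ | ∃ ψ' ∈ S, ∃ β' ∈ P, γ = dPath ψ' β'} (dPath ψ β) := by
  obtain ⟨L, hL, hψL⟩ := hψS
  obtain ⟨M, hMne, hM, hβM⟩ := hβ
  have hLne : L ≠ [] := by rintro rfl; exact hψ hψL
  refine ⟨_, ?_, ?_, .trans (.congr_comp (.refl _) (.congr_comp (.congr_test hψL) hβM))
    (.dPath_bigOr_bigUnion hLne hMne)⟩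
  · simpa [List.flatMap_eq_nil_iff, hMne] using L.exists_mem_of_ne_nil hLne
  · simp only [List.mem_flatMap, List.mem_map]
    rintro _ ⟨ψ', hψ', β', hβ', rfl⟩
    exact ⟨ψ', hL ψ' hψ', β', hM β' hβ', rfl⟩

end Disjunctions

section NormalForms

theorem mkNF_append_singleton (a : A) (C D : List (NodeExpr A)) (d : NodeExpr A) :
    mkNF a C (D ++ [d]) = .conj (mkNF a C D) (if d ∈ C then d else .neg d) :=
  List.foldl_concat _ _ _ _

theorem mkNF_congr (a : A) {C C' D : List (NodeExpr A)} (h : ∀ d ∈ D, d ∈ C ↔ d ∈ C') :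
    mkNF a C D = mkNF a C' D :=
  List.foldl_ext _ _ _ fun _ d hd => by rw [if_congr (h d hd) rfl rfl]

def candidates (D : List (NodeExpr A)) : Set (NodeExpr A) :=
  {θ | ∃ (a : A) (C : List (NodeExpr A)), C.Sublist D ∧ θ = mkNF a C D}

variable [Fintype A]

theorem NDer.mkNF_and_lab (a : A) (C D : List (NodeExpr A)) :
    NDer (.conj (mkNF a C D) (.lab a)) (mkNF a C D) := by
  induction D using List.reverseRecOn with
  | nil => exact .and_idem _
  | append_singleton D d ih => rw [mkNF_append_singleton]; exact ih.and_and_of_and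

theorem NDer.mkNF_and_literal (a : A) (C : List (NodeExpr A)) {D : List (NodeExpr A)}
    {d : NodeExpr A} (hd : d ∈ D) :
    NDer (.conj (mkNF a C D) (if d ∈ C then d else .neg d)) (mkNF a C D) := by
  induction D using List.reverseRecOn with
  | nil => cases hd
  | append_singleton D e ih =>
    rw [mkNF_append_singleton]
    rcases List.mem_append.mp hd with hd | hd
    · exact (ih hd).and_and_of_and
    · obtain rfl := List.mem_singleton.mp hd
      exact .trans (.and_assoc _ _ _) (.congr_conj (.refl _) (.and_idem _))

theorem isBigOrOf_candidates_lab (a : A) (D : List (NodeExpr A)) :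
    IsBigOrOf (candidates D) (.lab a) := by
  induction D using List.reverseRecOn with
  | nil => exact isBigOrOf_of_mem ⟨a, [], .slnil, rfl⟩
  | append_singleton D d ih =>
    refine ih.trans ?_
    rintro _ ⟨b, C, hC, rfl⟩
    by_cases hdD : d ∈ D
    · refine .of_nder (.symm (.mkNF_and_literal b C hdD)) (isBigOrOf_of_mem ?_)
      exact ⟨b, C, hC.trans (List.sublist_append_left D [d]), (mkNF_append_singleton b C D d).symm⟩
    · have hdC : d ∉ C := fun h => hdD (hC.subset h)
      refine .of_nder (.split _ d) (.nOr (isBigOrOf_of_mem ?_) (isBigOrOf_of_mem ?_))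
      · refine ⟨b, C ++ [d], hC.append (.refl [d]), ?_⟩
        rw [mkNF_append_singleton, if_pos (by simp)]
        congr 1
        exact mkNF_congr b fun e he => by simp [show e ≠ d by rintro rfl; exact hdD he]
      · refine ⟨b, C, hC.trans (List.sublist_append_left D [d]), ?_⟩
        rw [mkNF_append_singleton, if_neg hdC]

theorem isBigOrOf_candidates_topN (D : List (NodeExpr A)) :
    IsBigOrOf (candidates D) topN :=
  .of_nder .lbAx1 (isBigOrOf_bigOr fun _ hφ =>
    let ⟨a, _, ha⟩ := List.mem_map.mp hφ
    ha ▸ isBigOrOf_candidates_lab a D)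

end NormalForms

section Decides

variable [Fintype A] {θ φ ψ : NodeExpr A}

def Decides (θ φ : NodeExpr A) : Prop :=
  NDer (.conj θ φ) θ ∨ NDer (.conj θ φ) botN

theorem Decides.of_nder (h : NDer φ ψ) (hψ : Decides θ ψ) : Decides θ φ :=
  hψ.imp (.trans (.congr_conj (.refl θ) h)) (.trans (.congr_conj (.refl θ) h))

theorem Decides.neg (h : Decides θ φ) : Decides θ (.neg φ) :=
  h.symm.imp NDer.and_not_of_and_bot NDer.and_not_of_and

theorem Decides.of_neg (h : Decides θ (.neg φ)) : Decides θ φ :=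
  h.neg.of_nder (.symm (.not_not φ))

theorem Decides.conj (hφ : Decides θ φ) (hψ : Decides θ ψ) : Decides θ (.conj φ ψ) := by
  have hassoc : NDer (.conj θ (.conj φ ψ)) (.conj (.conj θ φ) ψ) := .symm (.and_assoc _ _ _)
  rcases hφ with hφ | hφ
  · exact hψ.imp (hassoc.trans (.congr_conj hφ (.refl ψ))).trans
      (hassoc.trans (.congr_conj hφ (.refl ψ))).trans
  · exact .inr (hassoc.trans (.trans (.congr_conj hφ (.refl ψ)) (.bot_and ψ)))

theorem decides_bigOr {l : List (NodeExpr A)} (h : ∀ φ ∈ l, Decides θ φ) :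
    Decides θ (bigOr l) := by
  induction l with
  | nil => exact .inr (.and_bot θ)
  | cons φ l ih =>
    have hsplit : NDer (.conj θ (bigOr (φ :: l))) (nOr (.conj θ φ) (.conj θ (bigOr l))) :=
      .and_or _ _ _
    rcases h φ (by simp) with hφ | hφ <;>
      rcases ih fun ψ hψ => h ψ (by simp [hψ]) with hl | hl
    · exact .inl (hsplit.trans (.trans (.or_congr hφ hl) (.or_idem θ)))
    · exact .inl (hsplit.trans (.trans (.or_congr hφ hl) (.or_bot θ)))
    · exact .inl (hsplit.trans (.trans (.or_congr hφ hl) (.bot_or θ)))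
    · exact .inr (hsplit.trans (.trans (.or_congr hφ hl) (.or_bot _)))

theorem IsBigOrOf.decides {S : Set (NodeExpr A)} (hφ : IsBigOrOf S φ)
    (hS : ∀ ψ ∈ S, Decides θ ψ) : Decides θ φ :=
  let ⟨_, hl, hφl⟩ := hφ
  (decides_bigOr fun ψ hψ => hS ψ (hl ψ hψ)).of_nder hφl

theorem decides_mkNF_of_mem (a : A) (C : List (NodeExpr A)) {D : List (NodeExpr A)}
    {d : NodeExpr A} (hd : d ∈ D) : Decides (mkNF a C D) d := by
  have h := NDer.mkNF_and_literal a C hd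
  by_cases hdC : d ∈ C
  · rw [if_pos hdC] at h
    exact .inl h
  · rw [if_neg hdC] at h
    exact Decides.of_neg (.inl h)

theorem decides_mkNF_lab (a b : A) (C D : List (NodeExpr A)) :
    Decides (mkNF a C D) (.lab b) := by
  obtain rfl | hab := eq_or_ne a b
  · exact .inl (.mkNF_and_lab a C D)
  · exact .inr (.trans (.congr_conj (.symm (.mkNF_and_lab a C D)) (.refl _))
      (.trans (.and_assoc _ _ _)
        (.trans (.congr_conj (.refl _) (.symm (.lbAx2 hab))) (.and_bot _))))

theorem decides_mkNF (b : A) (C : List (NodeExpr A)) {D : List (NodeExpr A)}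
    (hb : Decides θ (.lab b)) (hD : ∀ d ∈ D, Decides θ d) : Decides θ (mkNF b C D) := by
  induction D using List.reverseRecOn with
  | nil => exact hb
  | append_singleton D d ih =>
    rw [mkNF_append_singleton]
    refine (ih fun e he => hD e (by simp [he])).conj ?_
    split_ifs
    · exact hD d (by simp)
    · exact (hD d (by simp)).neg

theorem IsBigOrOf.of_decides {S : Set (NodeExpr A)} (hS : IsBigOrOf S topN)
    (hdec : ∀ θ ∈ S, Decides θ φ) : IsBigOrOf {θ | θ ∈ S ∧ NConsistent θ} φ := by
  obtain ⟨l, hl, htop⟩ := hS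
  refine .of_nder (.trans (.symm (.top_and φ)) (.trans (.congr_conj htop (.refl φ))
    (.bigOr_and l φ))) (isBigOrOf_bigOr ?_)
  simp only [List.mem_map]
  rintro _ ⟨θ, hθ, rfl⟩
  by_cases hbot : NDer (.conj θ φ) botN
  · exact .of_nder hbot isBigOrOf_botN
  · have hθφ : NDer (.conj θ φ) θ := (hdec θ (hl θ hθ)).resolve_right hbot
    exact .of_nder hθφ (isBigOrOf_of_mem ⟨hl θ hθ, fun hθ' => hbot (hθφ.trans hθ')⟩)

end Decides

section Levels

variable [Fintype A] {n : ℕ}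

/-- `D̂ₙ` in the order used to build `N̂ₙ`. -/
noncomputable def dList (A : Type) [Fintype A] (n : ℕ) : List (NodeExpr A) :=
  (NF A n).1.flatMap fun α => (NF A n).1.map fun β => .eqTest α β

theorem mem_dList {d : NodeExpr A} : d ∈ dList A n ↔ d ∈ Dnf A n := by
  simp [dList, Dnf, Pnf, eq_comm]

theorem mem_Pnf_zero {α : PathExpr A} : α ∈ Pnf A 0 ↔ α = .eps :=
  List.mem_singleton

theorem mem_Pnf_succ {α : PathExpr A} :
    α ∈ Pnf A (n + 1) ↔ α = .eps ∨ ∃ ψ ∈ Nnf A n, ∃ β ∈ Pnf A n, α = dPath ψ β := by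
  simp [Pnf, Nnf, NF, dPath, eq_comm]

theorem eps_mem_Pnf (n : ℕ) : (.eps : PathExpr A) ∈ Pnf A n := by
  cases n with
  | zero => exact mem_Pnf_zero.mpr rfl
  | succ n => exact mem_Pnf_succ.mpr (.inl rfl)

theorem mem_Nnf_succ {φ : NodeExpr A} :
    φ ∈ Nnf A (n + 1) ↔ NConsistent φ ∧ φ ∈ candidates (dList A (n + 1)) := by
  have hNF : (NF A (n + 1)).2 = ((dList A (n + 1)).sublists.flatMap fun C =>
      (Finset.univ : Finset A).toList.map fun a => mkNF a C (dList A (n + 1))).filter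
        fun φ => decide (NConsistent φ) := rfl
  simp only [Nnf, Set.mem_ofPred_eq, hNF, List.mem_filter, List.mem_flatMap, List.mem_map,
    List.mem_sublists, Finset.mem_toList, Finset.mem_univ, true_and, decide_eq_true_eq, candidates]
  exact and_comm.trans (and_congr_right' ⟨fun ⟨C, hC, a, h⟩ => ⟨a, C, hC, h.symm⟩,
    fun ⟨a, C, hC, h⟩ => ⟨C, hC, a, h.symm⟩⟩)

theorem mem_Nnf_zero {φ : NodeExpr A} :
    φ ∈ Nnf A 0 ↔ ∃ a, φ = .conj (.lab a) (.eqTest .eps .eps) := by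
  simp [Nnf, NF, eq_comm]

theorem nConsistent_of_mem_Nnf {φ : NodeExpr A} (hφ : φ ∈ Nnf A n) : NConsistent φ := by
  cases n with
  | zero =>
    obtain ⟨a, rfl⟩ := mem_Nnf_zero.mp hφ
    exact nConsistent_lab_conj_eqTest_eps a
  | succ n => exact (mem_Nnf_succ.mp hφ).1

/-- At level `0` the only data test is `⟨ε = ε⟩`, so `a ∧ ⟨ε = ε⟩` has the shape `mkNF`. -/
theorem mem_candidates_of_mem_Nnf {φ : NodeExpr A} (hφ : φ ∈ Nnf A n) :
    φ ∈ candidates (dList A n) := by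
  cases n with
  | zero =>
    obtain ⟨a, rfl⟩ := mem_Nnf_zero.mp hφ
    exact ⟨a, dList A 0, .refl _, by simp [mkNF, dList, NF]⟩
  | succ n => exact (mem_Nnf_succ.mp hφ).2

end Levels

section Lifting

variable [Fintype A] {n : ℕ}

/-- Each piece of the splitting of `⊤` over `D̂ₙ₊₁` decides every test of `D̂ₙ`, because the
paths of `P̂ₙ` are unions of paths of `P̂ₙ₊₁`; hence it decides every member of `N̂ₙ`. -/
theorem isBigOrOf_Nnf_succ (hP : ∀ α ∈ Pnf A n, IsBigUnionOf (Pnf A (n + 1)) α)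
    {φ : NodeExpr A} (hφ : φ ∈ Nnf A n) : IsBigOrOf (Nnf A (n + 1)) φ := by
  have hdec : ∀ θ ∈ candidates (dList A (n + 1)), Decides θ φ := by
    rintro _ ⟨a, C, -, rfl⟩
    obtain ⟨b, C₀, -, rfl⟩ := mem_candidates_of_mem_Nnf hφ
    refine decides_mkNF b C₀ (decides_mkNF_lab a b C _) fun d hd => ?_
    obtain ⟨α, hα, β, hβ, rfl⟩ := mem_dList.mp hd
    exact (isBigOrOf_eqTest (hP α hα) (hP β hβ)).decides fun e he =>
      decides_mkNF_of_mem a C (mem_dList.mpr he)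
  exact ((isBigOrOf_candidates_topN _).of_decides hdec).mono fun _ hθ =>
    mem_Nnf_succ.mpr hθ.symm

theorem isBigUnionOf_Pnf_succ : ∀ (n : ℕ) {α : PathExpr A}, α ∈ Pnf A n →
    IsBigUnionOf (Pnf A (n + 1)) α
  | 0, α, hα => by
    rw [mem_Pnf_zero.mp hα]
    exact isBigUnionOf_of_mem (eps_mem_Pnf 1)
  | n + 1, α, hα => by
    obtain rfl | ⟨ψ, hψ, β, hβ, rfl⟩ := mem_Pnf_succ.mp hα
    · exact isBigUnionOf_of_mem (eps_mem_Pnf _)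
    · refine (isBigUnionOf_dPath (nConsistent_of_mem_Nnf hψ)
        (isBigOrOf_Nnf_succ (fun _ => isBigUnionOf_Pnf_succ n) hψ)
        (isBigUnionOf_Pnf_succ n hβ)).mono ?_
      rintro _ ⟨ψ', hψ', β', hβ', rfl⟩
      exact mem_Pnf_succ.mpr (.inr ⟨ψ', hψ', β', hβ', rfl⟩)

theorem isBigOrOf_Nnf_of_le {m : ℕ} (hnm : n ≤ m) {φ : NodeExpr A} (hφ : φ ∈ Nnf A n) :
    IsBigOrOf (Nnf A m) φ := by
  induction m, hnm using Nat.le_induction with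
  | base => exact isBigOrOf_of_mem hφ
  | succ m _ ih =>
    exact ih.trans fun _ => isBigOrOf_Nnf_succ fun _ => isBigUnionOf_Pnf_succ m

theorem isBigUnionOf_Pnf_of_le {m : ℕ} (hnm : n ≤ m) {α : PathExpr A} (hα : α ∈ Pnf A n) :
    IsBigUnionOf (Pnf A m) α := by
  induction m, hnm using Nat.le_induction with
  | base => exact isBigUnionOf_of_mem hα
  | succ m _ ih => exact ih.trans fun _ => isBigUnionOf_Pnf_succ m

end Lifting

end XPathMinus

/-- Normal forms of level `n` are provably equivalent to disjunctions (resp.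
unions) of normal forms of any higher level `m > n`. -/
theorem XPathMinus.nf_lift {A : Type} [Fintype A] (hA : 1 < Fintype.card A)
    (m n : ℕ) (hmn : n < m) :
    (∀ φ ∈ Nnf A n, ∃ l : List (NodeExpr A), l ≠ [] ∧
      (∀ ψ ∈ l, ψ ∈ Nnf A m) ∧ NDer φ (bigOr l)) ∧
    (∀ α ∈ Pnf A n, ∃ l : List (PathExpr A), l ≠ [] ∧
      (∀ β ∈ l, β ∈ Pnf A m) ∧ PDer α (bigUnion l)) := by
  refine ⟨fun φ hφ => ?_, fun α hα => isBigUnionOf_Pnf_of_le hmn.le hα⟩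
  obtain ⟨l, hl, hφl⟩ := isBigOrOf_Nnf_of_le hmn.le hφ
  exact ⟨l, by rintro rfl; exact nConsistent_of_mem_Nnf hφ hφl, hl, hφl⟩
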